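/- arXiv:0810.2516 — 2 statements merged into one kernel-verified Lean document; each statement's English description precedes it below -/
import Mathlib

section
/- (Stationary-measure moment bound, core of Theorem 3.) Let m ≠ n be nonnegative integers, λ ∈ ℂ with Im λ ≥ 0, s ∈ ℍ, p ∈ (0,1), ε ∈ (0,1), ν a Borel probability measure on ℝ, and K ⊂ ℍ × ℍ a compact set. Suppose: (i) for every (z_1, z_2) ∈ (ℍ × ℍ) \ K, ∫_{ℝ^M} μ_p(z_1, z_2, q, λ) dν^{⊗M}(q) ≤ 1 − ε; (ii) C := sup_{(z_1,z_2) ∈ K} (1/2)∫_{ℝ^M} [w_s(φ(z_1,z_2,q,λ))^{1+p} + w_s(φ(z_2,z_1,q,λ))^{1+p}] dν^{⊗M}(q) < ∞; (iii) ρ is a Borel probability measure on ℍ with ∫_ℍ w_s(z)^{1+p} dρ(z) < ∞ satisfying the stationarity equation ∫_ℍ w_s(z)^{1+p} dρ(z) = ∫_{ℍ×ℍ×ℝ^M} w_s(φ(z_1, z_2, q, λ))^{1+p} dρ(z_1) dρ(z_2) dν^{⊗M}(q). Then ∫_ℍ w_s(z)^{1+p} dρ(z) ≤ C/ε. -/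
/-!
Write `I = ∫ w_s^{1+p} dρ` and `f(z₁, z₂) = ∫ w_s(φ(z₁, z₂, q, λ))^{1+p} dν^{⊗M}(q)`.
Stationarity gives `I = ∫∫ f(z₁, z₂)`, hence also `I = ∫∫ f(z₂, z₁)`, so `2I` is the integral of
the symmetrised kernel `f(z₁, z₂) + f(z₂, z₁)`. On `K` this kernel is at most `2C`; off `K` the
bound on `μ_p` says it is at most `(1 - ε)(w_s(z₁)^{1+p} + w_s(z₂)^{1+p})`. Integrating,
`2I ≤ 2C + (1 - ε) 2I`, and since `I < ∞` this gives `εI ≤ C`.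

The only point off `K` where `μ_p` carries no information is `z₁ = z₂ = s`, where it is `0/0`.
There `f(s, s) = 0` by Fatou's lemma: along the diagonal `f(z, z) ≤ (1 - ε) w_s(z)^{1+p} → 0`.
-/

open Complex MeasureTheory

noncomputable section

/-- The iterated map `φ_j(z, q_1,…,q_j, λ)`: `φ_0 = z`,
`φ_j = −1/(φ_{j−1} + λ − q_j + 1)`, where `q_j` is `q (j-1)`. -/
def phiIter (lam : ℂ) (q : ℕ → ℝ) : ℕ → ℂ → ℂ
  | 0, z => z
  | (j+1), z => -1 / (phiIter lam q j z + lam - (q j : ℂ) + 1)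

/-- `φ(z₁, z₂, q_1,…,q_M, λ)` with `M = m+n+1`:
`z₁` passes through the `n`-chain with `q_1,…,q_n`, `z₂` through the `m`-chain with
`q_{n+1},…,q_{n+m}`, and `q_M = q (n+m)`. -/
def phiMap (m n : ℕ) (lam : ℂ) (q : ℕ → ℝ) (z₁ z₂ : ℂ) : ℂ :=
  -1 / (phiIter lam q n z₁ + phiIter lam (fun i => q (n + i)) m z₂ + lam - (q (n + m) : ℂ))

/-- The weight based at `s`: `w_s(z) = |z−s|²/(Im z · Im s)`. -/
def wt (s z : ℂ) : ℝ := ‖z - s‖ ^ 2 / (z.im * s.im)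

/-- `μ_p(z₁, z₂, q, λ)`, computed with the weight based at `s`. -/
def muP (m n : ℕ) (p : ℝ) (s lam : ℂ) (q : ℕ → ℝ) (z₁ z₂ : ℂ) : ℝ :=
  (wt s (phiMap m n lam q z₁ z₂) ^ (1 + p) + wt s (phiMap m n lam q z₂ z₁) ^ (1 + p)) /
    (wt s z₁ ^ (1 + p) + wt s z₂ ^ (1 + p))

/-- The linear polynomials `R_k(z)`: `R_0 = 1`, `R_1 = 1+λ+z`,
`R_{k+1} = (1+λ)R_k − R_{k−1}`, as functions of `z`. -/
def Rfun (lam : ℂ) : ℕ → ℂ → ℂ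
  | 0, _ => 1
  | 1, z => 1 + lam + z
  | (k+2), z => (1 + lam) * Rfun lam (k+1) z - Rfun lam k z

/-- `λ` (with associated fixed point `zlam = Z(λ)`) is nondegenerate:
(a) `R_m, R_n` have no common real zero and their `z`-coefficients do not both vanish;
(b) `R_n(zlam)/R_m(zlam)` is neither real nor purely imaginary. -/
def Nondeg (m n : ℕ) (lam zlam : ℂ) : Prop :=
  (¬ ∃ x : ℝ, Rfun lam m x = 0 ∧ Rfun lam n x = 0) ∧
  (¬ ((Rfun lam m 1 - Rfun lam m 0 = 0) ∧ (Rfun lam n 1 - Rfun lam n 0 = 0))) ∧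
  (Rfun lam n zlam / Rfun lam m zlam).im ≠ 0 ∧
  (Rfun lam n zlam / Rfun lam m zlam).re ≠ 0

/-- The strip `R(E,ε) = {λ : Re λ ∈ E, 0 < Im λ ≤ ε}`. -/
def strip (E : Set ℝ) (ε : ℝ) : Set ℂ := {lam : ℂ | lam.re ∈ E ∧ 0 < lam.im ∧ lam.im ≤ ε}

/-- The closed strip `{λ : Re λ ∈ E, 0 ≤ Im λ ≤ ε}` (domain of `Z`). -/
def closedStrip (E : Set ℝ) (ε : ℝ) : Set ℂ :=
  {lam : ℂ | lam.re ∈ E ∧ 0 ≤ lam.im ∧ lam.im ≤ ε}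


open MeasureTheory
open scoped ENNReal

/-- Extension of a vector `q ∈ ℝ^M` to a sequence (by `0`), to feed into `phiMap`. -/
def extQ (M : ℕ) (q : Fin M → ℝ) : ℕ → ℝ := fun i => if h : i < M then q ⟨i, h⟩ else 0

open Filter Topology

lemma le_div_ofReal_of_le_add_ofReal_one_sub_mul {a C : ℝ≥0∞} {ε : ℝ} (hε : 0 < ε)
    (hε1 : ε ≤ 1) (ha : a ≠ ⊤) (h : a ≤ C + ENNReal.ofReal (1 - ε) * a) :
    a ≤ C / ENNReal.ofReal ε := by
  have hsplit : ENNReal.ofReal ε * a + ENNReal.ofReal (1 - ε) * a = a := by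
    rw [← add_mul, ← ENNReal.ofReal_add hε.le (sub_nonneg.2 hε1), add_sub_cancel,
      ENNReal.ofReal_one, one_mul]
  rw [ENNReal.le_div_iff_mul_le (Or.inl (ENNReal.ofReal_pos.2 hε).ne')
    (Or.inl ENNReal.ofReal_ne_top), mul_comm]
  exact (ENNReal.add_le_add_iff_right (ENNReal.mul_ne_top ENNReal.ofReal_ne_top ha)).1
    (hsplit.trans_le h)

theorem lintegral_le_div_of_symmetric_drift {X : Type*} [MeasurableSpace X] {ρ : Measure X}
    [IsProbabilityMeasure ρ] {W : X → ℝ≥0∞} {F : X → X → ℝ≥0∞}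
    (hF : Measurable (Function.uncurry F)) {C : ℝ≥0∞} {ε : ℝ} (hε : 0 < ε) (hε1 : ε ≤ 1)
    (hW : ∫⁻ x, W x ∂ρ ≠ ⊤) (hstat : ∫⁻ x, W x ∂ρ = ∫⁻ x, ∫⁻ y, F x y ∂ρ ∂ρ)
    (hdrift : ∀ᵐ x ∂ρ, ∀ᵐ y ∂ρ, F x y + F y x ≤ 2 * C + ENNReal.ofReal (1 - ε) * (W x + W y)) :
    ∫⁻ x, W x ∂ρ ≤ C / ENNReal.ofReal ε := by
  set I := ∫⁻ x, W x ∂ρ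
  have hswap : ∫⁻ x, ∫⁻ y, F y x ∂ρ ∂ρ = I := by
    rw [lintegral_lintegral_swap (f := fun x y => F y x) (hF.comp measurable_swap).aemeasurable,
      hstat]
  have hsum : ∫⁻ x, ∫⁻ y, (F x y + F y x) ∂ρ ∂ρ = I + I := by
    have hFx (x : X) : Measurable (F x) := hF.comp measurable_prodMk_left
    rw [lintegral_congr fun x => lintegral_add_left (hFx x) _,
      lintegral_add_left hF.lintegral_prod_right, ← hstat, hswap]
  have hbound : ∫⁻ x, ∫⁻ y, (2 * C + ENNReal.ofReal (1 - ε) * (W x + W y)) ∂ρ ∂ρ =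
      2 * C + ENNReal.ofReal (1 - ε) * (I + I) := by
    simp_rw [lintegral_add_left measurable_const, lintegral_const_mul' _ _ ENNReal.ofReal_ne_top,
      lintegral_add_left measurable_const, lintegral_const, measure_univ, mul_one,
      lintegral_add_right _ measurable_const, lintegral_const, measure_univ, mul_one]
    rfl
  have h2 : I + I ≤ 2 * C + ENNReal.ofReal (1 - ε) * (I + I) := calc
    I + I = ∫⁻ x, ∫⁻ y, (F x y + F y x) ∂ρ ∂ρ := hsum.symm
    _ ≤ ∫⁻ x, ∫⁻ y, (2 * C + ENNReal.ofReal (1 - ε) * (W x + W y)) ∂ρ ∂ρ :=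
      lintegral_mono_ae (hdrift.mono fun x hx => lintegral_mono_ae hx)
    _ = 2 * C + ENNReal.ofReal (1 - ε) * (I + I) := hbound
  refine le_div_ofReal_of_le_add_ofReal_one_sub_mul hε hε1 hW ?_
  rw [← two_mul, mul_left_comm, ← mul_add] at h2
  exact (ENNReal.mul_le_mul_iff_right two_ne_zero ENNReal.ofNat_ne_top).1 h2

section UpperHalfPlane

variable {lam : ℂ}

lemma ne_zero_of_im_pos {d : ℂ} (hd : 0 < d.im) : d ≠ 0 :=
  fun h => by simp [h] at hd

lemma im_neg_one_div_pos {d : ℂ} (hd : 0 < d.im) : 0 < (-1 / d).im := by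
  rw [neg_div, one_div, neg_im, inv_im, neg_div, neg_neg]
  exact div_pos hd (normSq_pos.mpr (ne_zero_of_im_pos hd))

lemma phiIter_im_pos (hlam : 0 ≤ lam.im) (q : ℕ → ℝ) (j : ℕ) {z : ℂ} (hz : 0 < z.im) :
    0 < (phiIter lam q j z).im := by
  induction j with
  | zero => exact hz
  | succ j ih =>
    refine im_neg_one_div_pos ?_
    simp only [add_im, sub_im, ofReal_im, one_im]
    linarith

lemma phiMap_im_pos (m n : ℕ) (hlam : 0 ≤ lam.im) (q : ℕ → ℝ) {z₁ z₂ : ℂ}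
    (h₁ : 0 < z₁.im) (h₂ : 0 < z₂.im) : 0 < (phiMap m n lam q z₁ z₂).im := by
  refine im_neg_one_div_pos ?_
  simp only [add_im, sub_im, ofReal_im]
  linarith [phiIter_im_pos hlam q n h₁, phiIter_im_pos hlam (fun i => q (n + i)) m h₂]

lemma continuousAt_phiIter (hlam : 0 ≤ lam.im) (q : ℕ → ℝ) (j : ℕ) {z : ℂ}
    (hz : 0 < z.im) : ContinuousAt (phiIter lam q j) z := by
  induction j with
  | zero => exact continuousAt_id
  | succ j ih =>
    refine continuousAt_const.div (by fun_prop) (ne_zero_of_im_pos ?_)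
    simp only [add_im, sub_im, ofReal_im, one_im]
    linarith [phiIter_im_pos hlam q j hz]

lemma continuousAt_phiMap (m n : ℕ) (hlam : 0 ≤ lam.im) (q : ℕ → ℝ) {z : ℂ × ℂ}
    (h₁ : 0 < z.1.im) (h₂ : 0 < z.2.im) :
    ContinuousAt (fun z : ℂ × ℂ => phiMap m n lam q z.1 z.2) z := by
  have hc₁ := (continuousAt_phiIter hlam q n h₁).comp continuousAt_fst
  have hc₂ := (continuousAt_phiIter hlam (fun i => q (n + i)) m h₂).comp continuousAt_snd
  refine continuousAt_const.div (((hc₁.add hc₂).add continuousAt_const).sub continuousAt_const)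
    (ne_zero_of_im_pos ?_)
  simp only [add_im, sub_im, ofReal_im]
  linarith [phiIter_im_pos hlam q n h₁, phiIter_im_pos hlam (fun i => q (n + i)) m h₂]

end UpperHalfPlane

section Measurability

lemma measurable_phiIter (lam : ℂ) (j : ℕ) :
    Measurable fun x : ℂ × (ℕ → ℝ) => phiIter lam x.2 j x.1 := by
  induction j with
  | zero => exact measurable_fst
  | succ j ih =>
    change Measurable fun x : ℂ × (ℕ → ℝ) => -1 / (phiIter lam x.2 j x.1 + lam - (x.2 j : ℂ) + 1)
    fun_prop

lemma measurable_phiMap (m n : ℕ) (lam : ℂ) :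
    Measurable fun x : (ℂ × ℂ) × (ℕ → ℝ) => phiMap m n lam x.2 x.1.1 x.1.2 := by
  have h₁ : Measurable fun x : (ℂ × ℂ) × (ℕ → ℝ) => phiIter lam x.2 n x.1.1 :=
    (measurable_phiIter lam n).comp (measurable_fst.fst.prodMk measurable_snd)
  have h₂ : Measurable fun x : (ℂ × ℂ) × (ℕ → ℝ) => phiIter lam (fun i => x.2 (n + i)) m x.1.2 :=
    (measurable_phiIter lam m).comp (measurable_fst.snd.prodMk (by fun_prop))
  change Measurable fun x : (ℂ × ℂ) × (ℕ → ℝ) => -1 / (phiIter lam x.2 n x.1.1 +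
    phiIter lam (fun i => x.2 (n + i)) m x.1.2 + lam - (x.2 (n + m) : ℂ))
  fun_prop

lemma measurable_extQ (M : ℕ) : Measurable (extQ M) := by
  refine measurable_pi_lambda _ fun i => ?_
  unfold extQ
  split_ifs
  · exact measurable_pi_apply _
  · exact measurable_const

end Measurability

section Weight

variable {s : ℂ}

lemma wt_nonneg (hs : 0 < s.im) {z : ℂ} (hz : 0 < z.im) : 0 ≤ wt s z := by
  unfold wt; positivity

lemma wt_pos (hs : 0 < s.im) {z : ℂ} (hz : 0 < z.im) (hzs : z ≠ s) : 0 < wt s z :=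
  div_pos (pow_pos (norm_pos_iff.mpr (sub_ne_zero.mpr hzs)) 2) (mul_pos hz hs)

lemma wt_self (s : ℂ) : wt s s = 0 := by simp [wt]

lemma continuousAt_wt (hs : 0 < s.im) {z : ℂ} (hz : 0 < z.im) : ContinuousAt (wt s) z :=
  ContinuousAt.div (by fun_prop) (by fun_prop) (mul_pos hz hs).ne'

lemma measurable_wt (s : ℂ) : Measurable (wt s) := by
  unfold wt; fun_prop

def weightPow (s : ℂ) (p : ℝ) (z : ℂ) : ℝ≥0∞ := ENNReal.ofReal (wt s z ^ (1 + p))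

lemma weightPow_self {p : ℝ} (hp : 1 + p ≠ 0) : weightPow s p s = 0 := by
  simp [weightPow, wt_self, Real.zero_rpow hp]

lemma continuousAt_weightPow (hs : 0 < s.im) {p : ℝ} (hp : 0 ≤ 1 + p) {z : ℂ}
    (hz : 0 < z.im) : ContinuousAt (weightPow s p) z :=
  ENNReal.continuous_ofReal.continuousAt.comp ((continuousAt_wt hs hz).rpow_const (Or.inr hp))

lemma measurable_weightPow (s : ℂ) (p : ℝ) : Measurable (weightPow s p) :=
  ENNReal.measurable_ofReal.comp ((measurable_wt s).pow_const _)

lemma weightPow_add_weightPow (hs : 0 < s.im) (p : ℝ) {z₁ z₂ : ℂ} (h₁ : 0 < z₁.im)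
    (h₂ : 0 < z₂.im) :
    weightPow s p z₁ + weightPow s p z₂ = ENNReal.ofReal (wt s z₁ ^ (1 + p) + wt s z₂ ^ (1 + p)) :=
  (ENNReal.ofReal_add (Real.rpow_nonneg (wt_nonneg hs h₁) _)
    (Real.rpow_nonneg (wt_nonneg hs h₂) _)).symm

end Weight

section ExpectedWeight

variable {m n : ℕ} {lam s : ℂ} {p : ℝ} {μ : Measure (Fin (m + n + 1) → ℝ)}

def expectedWeight (m n : ℕ) (lam s : ℂ) (p : ℝ) (μ : Measure (Fin (m + n + 1) → ℝ))
    (z₁ z₂ : ℂ) : ℝ≥0∞ :=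
  ∫⁻ q, weightPow s p (phiMap m n lam (extQ (m + n + 1) q) z₁ z₂) ∂μ

lemma measurable_weightPow_phiMap (m n : ℕ) (lam s : ℂ) (p : ℝ) :
    Measurable fun x : (ℂ × ℂ) × (Fin (m + n + 1) → ℝ) =>
      weightPow s p (phiMap m n lam (extQ (m + n + 1) x.2) x.1.1 x.1.2) :=
  (measurable_weightPow s p).comp <| (measurable_phiMap m n lam).comp
    (f := fun x : (ℂ × ℂ) × (Fin (m + n + 1) → ℝ) => (x.1, extQ (m + n + 1) x.2))
    (measurable_fst.prodMk ((measurable_extQ _).comp measurable_snd))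

lemma measurable_weightPow_phiMap_apply (z₁ z₂ : ℂ) :
    Measurable fun q : Fin (m + n + 1) → ℝ =>
      weightPow s p (phiMap m n lam (extQ (m + n + 1) q) z₁ z₂) :=
  (measurable_weightPow_phiMap m n lam s p).comp
    (f := fun q : Fin (m + n + 1) → ℝ => ((z₁, z₂), q)) measurable_prodMk_left

lemma measurable_expectedWeight [SFinite μ] :
    Measurable (Function.uncurry (expectedWeight m n lam s p μ)) :=
  (measurable_weightPow_phiMap m n lam s p).lintegral_prod_right'

lemma expectedWeight_add_expectedWeight (z₁ z₂ : ℂ) :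
    expectedWeight m n lam s p μ z₁ z₂ + expectedWeight m n lam s p μ z₂ z₁ =
      ∫⁻ q, (weightPow s p (phiMap m n lam (extQ (m + n + 1) q) z₁ z₂) +
        weightPow s p (phiMap m n lam (extQ (m + n + 1) q) z₂ z₁)) ∂μ :=
  (lintegral_add_left (measurable_weightPow_phiMap_apply z₁ z₂) _).symm

lemma expectedWeight_add_le_of_lintegral_muP_le (hlam : 0 ≤ lam.im) (hs : 0 < s.im)
    {z₁ z₂ : ℂ} (h₁ : 0 < z₁.im) (h₂ : 0 < z₂.im) (hzs : z₁ ≠ s ∨ z₂ ≠ s) {c : ℝ≥0∞}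
    (hmu : ∫⁻ q, ENNReal.ofReal (muP m n p s lam (extQ (m + n + 1) q) z₁ z₂) ∂μ ≤ c) :
    expectedWeight m n lam s p μ z₁ z₂ + expectedWeight m n lam s p μ z₂ z₁ ≤
      c * (weightPow s p z₁ + weightPow s p z₂) := by
  set D := wt s z₁ ^ (1 + p) + wt s z₂ ^ (1 + p)
  have hD : 0 < D := by
    rcases hzs with hzs | hzs
    · exact add_pos_of_pos_of_nonneg (Real.rpow_pos_of_pos (wt_pos hs h₁ hzs) _)
        (Real.rpow_nonneg (wt_nonneg hs h₂) _)
    · exact add_pos_of_nonneg_of_pos (Real.rpow_nonneg (wt_nonneg hs h₁) _)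
        (Real.rpow_pos_of_pos (wt_pos hs h₂ hzs) _)
  have hmu_eq : ∀ q : Fin (m + n + 1) → ℝ,
      ENNReal.ofReal (muP m n p s lam (extQ (m + n + 1) q) z₁ z₂) =
        (weightPow s p (phiMap m n lam (extQ (m + n + 1) q) z₁ z₂) +
          weightPow s p (phiMap m n lam (extQ (m + n + 1) q) z₂ z₁)) * (ENNReal.ofReal D)⁻¹ :=
    fun q => by
      rw [muP, ENNReal.ofReal_div_of_pos hD, div_eq_mul_inv,
        weightPow_add_weightPow hs p (phiMap_im_pos m n hlam _ h₁ h₂)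
          (phiMap_im_pos m n hlam _ h₂ h₁)]
  rw [weightPow_add_weightPow hs p h₁ h₂, expectedWeight_add_expectedWeight,
    ← ENNReal.div_le_iff (ENNReal.ofReal_pos.2 hD).ne' ENNReal.ofReal_ne_top, div_eq_mul_inv,
    ← lintegral_mul_const' _ _ (ENNReal.inv_ne_top.2 (ENNReal.ofReal_pos.2 hD).ne')]
  simpa only [hmu_eq] using hmu

lemma expectedWeight_self_eq_zero (hlam : 0 ≤ lam.im) (hs : 0 < s.im) (hp : 0 < 1 + p)
    {c : ℝ≥0∞} (hc : c ≠ ⊤)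
    (hbound : ∀ᶠ z in 𝓝[≠] s, expectedWeight m n lam s p μ z z ≤ c * weightPow s p z) :
    expectedWeight m n lam s p μ s s = 0 := by
  have hW : Tendsto (weightPow s p) (𝓝[≠] s) (𝓝 0) := by
    simpa [weightPow_self hp.ne'] using
      (continuousAt_weightPow hs hp.le hs).tendsto.mono_left nhdsWithin_le_nhds
  have hφ : ∀ q : Fin (m + n + 1) → ℝ,
      Tendsto (fun z => weightPow s p (phiMap m n lam (extQ (m + n + 1) q) z z)) (𝓝[≠] s)
        (𝓝 (weightPow s p (phiMap m n lam (extQ (m + n + 1) q) s s))) := fun q => by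
    set φ := fun z : ℂ => phiMap m n lam (extQ (m + n + 1) q) z z
    have hW' := continuousAt_weightPow hs hp.le (phiMap_im_pos m n hlam (extQ _ q) hs hs)
    have hφ' : ContinuousAt φ s :=
      (continuousAt_phiMap m n hlam (extQ (m + n + 1) q) (z := (s, s)) hs hs).comp
        (f := fun z : ℂ => (z, z)) (continuousAt_id.prodMk continuousAt_id)
    exact (hW'.comp (f := φ) hφ').tendsto.mono_left nhdsWithin_le_nhds
  refine le_antisymm ?_ bot_le
  calc expectedWeight m n lam s p μ s s
      = ∫⁻ q, liminf (fun z => weightPow s p (phiMap m n lam (extQ (m + n + 1) q) z z))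
          (𝓝[≠] s) ∂μ := lintegral_congr fun q => (hφ q).liminf_eq.symm
    _ ≤ liminf (fun z => expectedWeight m n lam s p μ z z) (𝓝[≠] s) :=
      lintegral_liminf_le fun z => measurable_weightPow_phiMap_apply z z
    _ ≤ liminf (fun z => c * weightPow s p z) (𝓝[≠] s) := liminf_le_liminf hbound
    _ = 0 := by simpa using (ENNReal.Tendsto.const_mul hW (Or.inr hc)).liminf_eq

lemma expectedWeight_add_le_of_notMem (hlam : 0 ≤ lam.im) (hs : 0 < s.im) (hp : 0 < 1 + p)
    {K : Set (ℂ × ℂ)} (hK : IsClosed K) {c : ℝ≥0∞} (hc : c ≠ ⊤)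
    (hoffK : ∀ z₁ z₂ : ℂ, 0 < z₁.im → 0 < z₂.im → (z₁, z₂) ∉ K →
      ∫⁻ q, ENNReal.ofReal (muP m n p s lam (extQ (m + n + 1) q) z₁ z₂) ∂μ ≤ c)
    {z₁ z₂ : ℂ} (h₁ : 0 < z₁.im) (h₂ : 0 < z₂.im) (hz : (z₁, z₂) ∉ K) :
    expectedWeight m n lam s p μ z₁ z₂ + expectedWeight m n lam s p μ z₂ z₁ ≤
      c * (weightPow s p z₁ + weightPow s p z₂) := by
  by_cases hzs : z₁ = s ∧ z₂ = s
  · rw [hzs.1, hzs.2] at hz ⊢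
    have hnear : ∀ᶠ z in 𝓝 s, 0 < z.im ∧ (z, z) ∉ K :=
      (continuous_im.continuousAt.eventually (lt_mem_nhds hs)).and
        ((continuous_id.prodMk continuous_id).continuousAt.eventually
          (hK.isOpen_compl.mem_nhds hz))
    have hbound : ∀ᶠ z in 𝓝[≠] s, expectedWeight m n lam s p μ z z ≤ c * weightPow s p z := by
      filter_upwards [nhdsWithin_le_nhds hnear, self_mem_nhdsWithin] with z ⟨hz, hzK⟩ hzs
      have h := expectedWeight_add_le_of_lintegral_muP_le hlam hs hz hz (Or.inl hzs)
        (hoffK z z hz hz hzK)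
      rw [← two_mul, ← two_mul, mul_left_comm] at h
      exact (ENNReal.mul_le_mul_iff_right two_ne_zero ENNReal.ofNat_ne_top).1 h
    simp [expectedWeight_self_eq_zero hlam hs hp hc hbound]
  · exact expectedWeight_add_le_of_lintegral_muP_le hlam hs h₁ h₂ (not_and_or.1 hzs)
      (hoffK z₁ z₂ h₁ h₂ hz)

lemma expectedWeight_add_le_of_mem {K : Set (ℂ × ℂ)} {z : ℂ × ℂ} (hz : z ∈ K) :
    expectedWeight m n lam s p μ z.1 z.2 + expectedWeight m n lam s p μ z.2 z.1 ≤
      2 * ⨆ (z : ℂ × ℂ) (_ : z ∈ K), (1 / 2 : ℝ≥0∞) * ∫⁻ q,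
        (weightPow s p (phiMap m n lam (extQ (m + n + 1) q) z.1 z.2) +
          weightPow s p (phiMap m n lam (extQ (m + n + 1) q) z.2 z.1)) ∂μ := by
  rw [expectedWeight_add_expectedWeight]
  calc _ = 2 * ((1 / 2 : ℝ≥0∞) * ∫⁻ q,
        (weightPow s p (phiMap m n lam (extQ (m + n + 1) q) z.1 z.2) +
          weightPow s p (phiMap m n lam (extQ (m + n + 1) q) z.2 z.1)) ∂μ) := by
        rw [← mul_assoc, one_div, ENNReal.mul_inv_cancel two_ne_zero ENNReal.ofNat_ne_top,
          one_mul]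
    _ ≤ _ := by
        gcongr
        exact le_iSup₂ (f := fun (z : ℂ × ℂ) (_ : z ∈ K) => (1 / 2 : ℝ≥0∞) * ∫⁻ q,
          (weightPow s p (phiMap m n lam (extQ (m + n + 1) q) z.1 z.2) +
            weightPow s p (phiMap m n lam (extQ (m + n + 1) q) z.2 z.1)) ∂μ) z hz

end ExpectedWeight

theorem statement5_general (m n : ℕ) (lam : ℂ) (hlam : 0 ≤ lam.im)
    (s : ℂ) (hs : 0 < s.im) (p ε : ℝ) (hp : 0 < p)
    (hε : 0 < ε) (hε1 : ε < 1)
    (ν : Measure ℝ) [IsProbabilityMeasure ν]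
    (K : Set (ℂ × ℂ)) (hK : IsCompact K)
    (hoffK : ∀ z₁ z₂ : ℂ, 0 < z₁.im → 0 < z₂.im → (z₁, z₂) ∉ K →
      ∫⁻ q : Fin (m + n + 1) → ℝ,
          ENNReal.ofReal (muP m n p s lam (extQ (m + n + 1) q) z₁ z₂)
          ∂(Measure.pi fun _ => ν) ≤ ENNReal.ofReal (1 - ε))
    (C : ℝ≥0∞)
    (hC : C = ⨆ (z : ℂ × ℂ) (_ : z ∈ K),
      (1 / 2 : ℝ≥0∞) * ∫⁻ q : Fin (m + n + 1) → ℝ,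
        (ENNReal.ofReal (wt s (phiMap m n lam (extQ (m + n + 1) q) z.1 z.2) ^ (1 + p)) +
         ENNReal.ofReal (wt s (phiMap m n lam (extQ (m + n + 1) q) z.2 z.1) ^ (1 + p)))
        ∂(Measure.pi fun _ => ν))
    (ρ : Measure ℂ) [IsProbabilityMeasure ρ] (hρsupp : ρ {z : ℂ | z.im ≤ 0} = 0)
    (hmom : ∫⁻ z, ENNReal.ofReal (wt s z ^ (1 + p)) ∂ρ < ⊤)
    (hstat : ∫⁻ z, ENNReal.ofReal (wt s z ^ (1 + p)) ∂ρ =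
      ∫⁻ z₁, ∫⁻ z₂, ∫⁻ q : Fin (m + n + 1) → ℝ,
        ENNReal.ofReal (wt s (phiMap m n lam (extQ (m + n + 1) q) z₁ z₂) ^ (1 + p))
        ∂(Measure.pi fun _ => ν) ∂ρ ∂ρ) :
    ∫⁻ z, ENNReal.ofReal (wt s z ^ (1 + p)) ∂ρ ≤ C / ENNReal.ofReal ε := by
  have hdrift : ∀ z₁ z₂ : ℂ, 0 < z₁.im → 0 < z₂.im →
      expectedWeight m n lam s p (Measure.pi fun _ => ν) z₁ z₂ +
          expectedWeight m n lam s p (Measure.pi fun _ => ν) z₂ z₁ ≤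
        2 * C + ENNReal.ofReal (1 - ε) * (weightPow s p z₁ + weightPow s p z₂) := by
    intro z₁ z₂ h₁ h₂
    by_cases hz : (z₁, z₂) ∈ K
    · rw [hC]
      exact le_add_right (expectedWeight_add_le_of_mem (z := (z₁, z₂)) hz)
    · exact le_add_left (expectedWeight_add_le_of_notMem hlam hs (by linarith) hK.isClosed
        ENNReal.ofReal_ne_top hoffK h₁ h₂ hz)
  have him : ∀ᵐ z ∂ρ, 0 < z.im :=
    measure_mono_null (fun z (hz : ¬0 < z.im) => not_lt.1 hz) hρsupp
  exact lintegral_le_div_of_symmetric_drift (W := weightPow s p)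
    (F := expectedWeight m n lam s p (Measure.pi fun _ => ν)) measurable_expectedWeight hε hε1.le
    hmom.ne hstat (him.mono fun z₁ h₁ => him.mono fun z₂ h₂ => hdrift z₁ z₂ h₁ h₂)

/-- **stationary-measure moment bound.** Let `m ≠ n`, `Im λ ≥ 0`,
`s ∈ ℍ`, `p ∈ (0,1)`, `ε ∈ (0,1)`, `ν` a Borel probability measure on `ℝ`, and
`K ⊂ ℍ×ℍ` compact.  If (i) `∫ μ_p dν^{⊗M} ≤ 1−ε` off `K`, (ii) the sup `C` over `K`
of `(1/2)∫ [w_s(φ(z₁,z₂,q,λ))^{1+p} + w_s(φ(z₂,z₁,q,λ))^{1+p}] dν^{⊗M}` is finite,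
and (iii) `ρ` is a Borel probability measure on `ℍ` with finite weight moment
satisfying the stationarity equation, then `∫ w_s^{1+p} dρ ≤ C/ε`. -/
theorem statement5 (m n : ℕ) (hmn : m ≠ n) (lam : ℂ) (hlam : 0 ≤ lam.im)
    (s : ℂ) (hs : 0 < s.im) (p ε : ℝ) (hp : 0 < p) (hp1 : p < 1)
    (hε : 0 < ε) (hε1 : ε < 1)
    (ν : Measure ℝ) [IsProbabilityMeasure ν]
    (K : Set (ℂ × ℂ)) (hK : IsCompact K)
    (hKsub : K ⊆ {z : ℂ × ℂ | 0 < z.1.im ∧ 0 < z.2.im})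
    (hoffK : ∀ z₁ z₂ : ℂ, 0 < z₁.im → 0 < z₂.im → (z₁, z₂) ∉ K →
      ∫⁻ q : Fin (m + n + 1) → ℝ,
          ENNReal.ofReal (muP m n p s lam (extQ (m + n + 1) q) z₁ z₂)
          ∂(Measure.pi fun _ => ν) ≤ ENNReal.ofReal (1 - ε))
    (C : ℝ≥0∞)
    (hC : C = ⨆ (z : ℂ × ℂ) (_ : z ∈ K),
      (1 / 2 : ℝ≥0∞) * ∫⁻ q : Fin (m + n + 1) → ℝ,
        (ENNReal.ofReal (wt s (phiMap m n lam (extQ (m + n + 1) q) z.1 z.2) ^ (1 + p)) +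
         ENNReal.ofReal (wt s (phiMap m n lam (extQ (m + n + 1) q) z.2 z.1) ^ (1 + p)))
        ∂(Measure.pi fun _ => ν))
    (hCfin : C < ⊤)
    (ρ : Measure ℂ) [IsProbabilityMeasure ρ] (hρsupp : ρ {z : ℂ | z.im ≤ 0} = 0)
    (hmom : ∫⁻ z, ENNReal.ofReal (wt s z ^ (1 + p)) ∂ρ < ⊤)
    (hstat : ∫⁻ z, ENNReal.ofReal (wt s z ^ (1 + p)) ∂ρ =
      ∫⁻ z₁, ∫⁻ z₂, ∫⁻ q : Fin (m + n + 1) → ℝ,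
        ENNReal.ofReal (wt s (phiMap m n lam (extQ (m + n + 1) q) z₁ z₂) ^ (1 + p))
        ∂(Measure.pi fun _ => ν) ∂ρ ∂ρ) :
    ∫⁻ z, ENNReal.ofReal (wt s z ^ (1 + p)) ∂ρ ≤ C / ENNReal.ofReal ε :=
  statement5_general m n lam hlam s hs p ε hp hε hε1 ν K hK hoffK C hC ρ hρsupp hmom hstat

end
end

section
/- (Contraction at zero disorder: μ_0 ≤ 1.) Let m, n be nonnegative integers, M = m+n+1, and λ ∈ ℂ with Im λ ≥ 0. Suppose z_λ ∈ ℍ satisfies the fixed-point equation z_λ = φ(z_λ, z_λ, 0,…,0, λ). Then for all z_1, z_2 ∈ ℍ: w(φ(z_1, z_2, 0,…,0, λ)) + w(φ(z_2, z_1, 0,…,0, λ)) ≤ w(z_1) + w(z_2), where w = w_{z_λ} is the weight based at z_λ. -/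
/-!
Since `w_s(z) = 2 (cosh d(z, s) - 1)` for the hyperbolic distance `d`, the isometry
`z ↦ -1/z` of `ℍ` preserves weights, and a translation by `c` with `Im c ≥ 0` can only
decrease them. Hence every chain `φ_j` is weight non-increasing. At the junction,
Cauchy–Schwarz bounds `w_{a+b}(u+v)` by the average of `w_a(u)` and `w_b(v)` weighted by
`Im a` and `Im b`. With `a`, `b` the chain images of the fixed point `z_λ`, the two terms on
the left are thus bounded by convex combinations of `w(z₁)` and `w(z₂)` with weights swapped,
and they add up to `w(z₁) + w(z₂)`.
-/

noncomputable section

open Complex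

lemma im_neg_one_div (P : ℂ) : (-1 / P).im = P.im / normSq P := by
  simp [neg_div]

lemma im_neg_one_div_pos_s17 {P : ℂ} (hP : 0 < P.im) : 0 < (-1 / P).im := by
  rw [im_neg_one_div]
  exact div_pos hP (normSq_pos.2 (ne_of_apply_ne im hP.ne'))

lemma wt_neg_one_div {P Q : ℂ} (hP : P ≠ 0) (hQ : Q ≠ 0) :
    wt (-1 / Q) (-1 / P) = wt Q P := by
  have hPQ : -1 / P - -1 / Q = (P - Q) / (P * Q) := by field_simp; ring
  have hnP : normSq P ≠ 0 := normSq_eq_zero.not.2 hP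
  have hnQ : normSq Q ≠ 0 := normSq_eq_zero.not.2 hQ
  simp only [wt, hPQ, im_neg_one_div, norm_div, norm_mul, div_pow, mul_pow, Complex.sq_norm]
  field_simp

lemma wt_add_le {s z c : ℂ} (hs : 0 < s.im) (hz : 0 < z.im) (hc : 0 ≤ c.im) :
    wt (s + c) (z + c) ≤ wt s z := by
  simp only [wt, add_sub_add_right_eq_sub, add_im]
  gcongr <;> linarith

lemma norm_add_sq_div_add_le {E : Type*} [SeminormedAddCommGroup E] (p q : E) {x y : ℝ}
    (hx : 0 < x) (hy : 0 < y) :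
    ‖p + q‖ ^ 2 / (x + y) ≤ ‖p‖ ^ 2 / x + ‖q‖ ^ 2 / y := by
  have titu := Finset.sq_sum_div_le_sum_sq_div Finset.univ ![‖p‖, ‖q‖] (g := ![x, y])
    (by simp [Fin.forall_fin_two, hx, hy])
  simp only [Fin.sum_univ_two, Matrix.cons_val_zero, Matrix.cons_val_one] at titu
  calc ‖p + q‖ ^ 2 / (x + y) ≤ (‖p‖ + ‖q‖) ^ 2 / (x + y) := by gcongr; exact norm_add_le p q
    _ ≤ _ := titu

lemma wt_add_add_le {a b u v : ℂ} (ha : 0 < a.im) (hb : 0 < b.im) (hu : 0 < u.im)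
    (hv : 0 < v.im) :
    wt (a + b) (u + v) ≤ (a.im * wt a u + b.im * wt b v) / (a.im + b.im) := by
  have hweighted : a.im * wt a u + b.im * wt b v = ‖u - a‖ ^ 2 / u.im + ‖v - b‖ ^ 2 / v.im := by
    simp only [wt]; field_simp
  rw [hweighted, wt, add_sub_add_comm, add_im, add_im, ← div_div]
  gcongr
  exact norm_add_sq_div_add_le _ _ hu hv

lemma phiIter_succ (lam : ℂ) (q : ℕ → ℝ) (j : ℕ) (z : ℂ) :
    phiIter lam q (j + 1) z = -1 / (phiIter lam q j z + (lam - q j + 1)) := by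
  rw [phiIter]; ring

lemma im_phiIter_pos {lam : ℂ} (hlam : 0 ≤ lam.im) (q : ℕ → ℝ) (j : ℕ) {z : ℂ}
    (hz : 0 < z.im) : 0 < (phiIter lam q j z).im := by
  induction j with
  | zero => exact hz
  | succ j ih =>
    refine phiIter_succ lam q j z ▸ im_neg_one_div_pos_s17 ?_
    simp only [add_im, sub_im, one_im, ofReal_im]
    linarith

lemma wt_phiIter_le {lam : ℂ} (hlam : 0 ≤ lam.im) (q : ℕ → ℝ) (j : ℕ) {s z : ℂ}
    (hs : 0 < s.im) (hz : 0 < z.im) :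
    wt (phiIter lam q j s) (phiIter lam q j z) ≤ wt s z := by
  induction j with
  | zero => exact le_rfl
  | succ j ih =>
    have hc : 0 ≤ (lam - q j + 1).im := by simpa using hlam
    have hne {w : ℂ} (hw : 0 < w.im) : phiIter lam q j w + (lam - q j + 1) ≠ 0 := by
      refine ne_of_apply_ne im (ne_of_gt ?_)
      rw [add_im, zero_im]; linarith [im_phiIter_pos hlam q j hw]
    rw [phiIter_succ, phiIter_succ, wt_neg_one_div (hne hz) (hne hs)]
    exact (wt_add_le (im_phiIter_pos hlam q j hs) (im_phiIter_pos hlam q j hz) hc).trans ih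

lemma wt_phiMap_le {m n : ℕ} {lam : ℂ} (hlam : 0 ≤ lam.im) (q : ℕ → ℝ) {s z₁ z₂ : ℂ}
    (hs : 0 < s.im) (hz₁ : 0 < z₁.im) (hz₂ : 0 < z₂.im) :
    wt (phiMap m n lam q s s) (phiMap m n lam q z₁ z₂) ≤
      ((phiIter lam q n s).im * wt s z₁ + (phiIter lam (fun i => q (n + i)) m s).im * wt s z₂) /
        ((phiIter lam q n s).im + (phiIter lam (fun i => q (n + i)) m s).im) := by
  set a := phiIter lam q n s
  set b := phiIter lam (fun i => q (n + i)) m s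
  set u := phiIter lam q n z₁
  set v := phiIter lam (fun i => q (n + i)) m z₂
  set c := lam - q (n + m)
  have ha : 0 < a.im := im_phiIter_pos hlam _ _ hs
  have hb : 0 < b.im := im_phiIter_pos hlam _ _ hs
  have hu : 0 < u.im := im_phiIter_pos hlam _ _ hz₁
  have hv : 0 < v.im := im_phiIter_pos hlam _ _ hz₂
  have hc : 0 ≤ c.im := by simpa [c] using hlam
  have hne {x y : ℂ} (hx : 0 < x.im) (hy : 0 < y.im) : x + y + c ≠ 0 := by
    refine ne_of_apply_ne im (ne_of_gt ?_)
    simp only [add_im, zero_im]; linarith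
  calc wt (phiMap m n lam q s s) (phiMap m n lam q z₁ z₂) = wt (a + b + c) (u + v + c) := by
        simp only [phiMap, add_sub_assoc]
        exact wt_neg_one_div (hne hu hv) (hne ha hb)
    _ ≤ wt (a + b) (u + v) := wt_add_le (by rw [add_im]; linarith) (by rw [add_im]; linarith) hc
    _ ≤ (a.im * wt a u + b.im * wt b v) / (a.im + b.im) := wt_add_add_le ha hb hu hv
    _ ≤ (a.im * wt s z₁ + b.im * wt s z₂) / (a.im + b.im) := by
        gcongr
        · exact wt_phiIter_le hlam _ _ hs hz₁
        · exact wt_phiIter_le hlam _ _ hs hz₂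

/-- **contraction at zero disorder: `μ₀ ≤ 1`.** Let `M = m+n+1`,
`Im λ ≥ 0`, and suppose `z_λ ∈ ℍ` satisfies `z_λ = φ(z_λ, z_λ, 0,…,0, λ)`.  Then for
all `z₁, z₂ ∈ ℍ`:
`w(φ(z₁,z₂,0,…,0,λ)) + w(φ(z₂,z₁,0,…,0,λ)) ≤ w(z₁) + w(z₂)`,
where `w = w_{z_λ}` is the weight based at `z_λ`. -/
theorem statement17 (m n : ℕ) (lam : ℂ) (hlam : 0 ≤ lam.im)
    (zlam : ℂ) (hzlam : 0 < zlam.im)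
    (hfix : zlam = phiMap m n lam (fun _ => 0) zlam zlam)
    (z₁ z₂ : ℂ) (hz₁ : 0 < z₁.im) (hz₂ : 0 < z₂.im) :
    wt zlam (phiMap m n lam (fun _ => 0) z₁ z₂) +
      wt zlam (phiMap m n lam (fun _ => 0) z₂ z₁) ≤
      wt zlam z₁ + wt zlam z₂ := by
  have h₁ := wt_phiMap_le (m := m) (n := n) hlam (fun _ => 0) hzlam hz₁ hz₂
  have h₂ := wt_phiMap_le (m := m) (n := n) hlam (fun _ => 0) hzlam hz₂ hz₁
  rw [← hfix] at h₁ h₂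
  set α := (phiIter lam (fun _ => 0) n zlam).im
  set β := (phiIter lam (fun _ => 0) m zlam).im
  have hαβ : 0 < α + β :=
    add_pos (im_phiIter_pos hlam _ _ hzlam) (im_phiIter_pos hlam _ _ hzlam)
  calc _ ≤ (α * wt zlam z₁ + β * wt zlam z₂) / (α + β) +
        (α * wt zlam z₂ + β * wt zlam z₁) / (α + β) := add_le_add h₁ h₂
    _ = wt zlam z₁ + wt zlam z₂ := by field_simp; ring

end
end
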